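/- As δ tends to 0 from the right, δ·(g(δ) − f(δ)) tends to 1/24 (= 0.041666…). -/

import Mathlib

open Classical Finset

noncomputable section

def nbr {V : Type} [Fintype V] (G : SimpleGraph V) (S : Finset V) : Finset V :=
  Finset.univ.filter fun j => ∃ i ∈ S, G.Adj i j

def aSum {V : Type} (α : V → ℝ) (S : Finset V) : ℝ := ∑ i ∈ S, α i

def IsIndep {V : Type} (G : SimpleGraph V) (I : Finset V) : Prop :=
  I.Nonempty ∧ ∀ i ∈ I, ∀ j ∈ I, ¬ G.Adj i j

def indepSets {V : Type} [Fintype V] (G : SimpleGraph V) : Finset (Finset V) :=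
  Finset.univ.filter fun I => IsIndep G I

def Ncond {V : Type} [Fintype V] (G : SimpleGraph V) (α : V → ℝ) : Prop :=
  ∀ I ∈ indepSets G, aSum α I < aSum α (nbr G I)

def Tlist {V : Type} [Fintype V] [DecidableEq V] (G : SimpleGraph V) (α : V → ℝ) :
    List V → Finset V → ℝ
  | [], _ => 1
  | i :: l, P =>
      α i / (aSum α (nbr G (insert i P)) - aSum α (insert i P)) * Tlist G α l (insert i P)

def Erat {V : Type} [Fintype V] [DecidableEq V] (G : SimpleGraph V) (α : V → ℝ) :
    List V → Finset V → ℝ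
  | [], _ => 0
  | i :: l, P =>
      aSum α (nbr G (insert i P)) / (aSum α (nbr G (insert i P)) - aSum α (insert i P)) +
        Erat G α l (insert i P)

def TI {V : Type} [Fintype V] [DecidableEq V] (G : SimpleGraph V) (α : V → ℝ) (I : Finset V) : ℝ :=
  ∑ l ∈ I.toList.permutations.toFinset, Tlist G α l ∅

def EI {V : Type} [Fintype V] [DecidableEq V] (G : SimpleGraph V) (α : V → ℝ) (I : Finset V) : ℝ :=
  ∑ l ∈ I.toList.permutations.toFinset, Erat G α l ∅ * Tlist G α l ∅

def meanQ {V : Type} [Fintype V] [DecidableEq V] (G : SimpleGraph V) (α : V → ℝ) : ℝ :=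
  (1 + ∑ I ∈ indepSets G, TI G α I)⁻¹ * ∑ I ∈ indepSets G, EI G α I

def IsWord {V : Type} (G : SimpleGraph V) (w : List V) : Prop :=
  w.Pairwise fun a b => ¬ G.Adj a b

def piHatAux {V : Type} [Fintype V] [DecidableEq V] (G : SimpleGraph V) (α : V → ℝ) :
    List V → Finset V → ℝ
  | [], _ => 1
  | i :: l, P => α i / aSum α (nbr G (insert i P)) * piHatAux G α l (insert i P)

def piHat {V : Type} [Fintype V] [DecidableEq V] (G : SimpleGraph V) (α : V → ℝ) (w : List V) : ℝ :=
  piHatAux G α w ∅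

def addEdge {V : Type} (G : SimpleGraph V) (u v : V) : SimpleGraph V :=
  G ⊔ SimpleGraph.fromEdgeSet {s(u, v)}

end

noncomputable def fQ (x : ℝ) : ℝ :=
  ((1/2 - 2*x) * (1/2 + 2*x) / (4*x)^2 + (1/2 - x) * (1/2 + x) / (2*x)^2
      + 3*x*(1 - 3*x) / (1 - 6*x)^2) /
    (1 + (1/2 - 2*x)/(4*x) + (1/2 - x)/(2*x) + 3*x/(1 - 6*x))

noncomputable def gQ (x : ℝ) : ℝ :=
  (2 * ((1/4 - x) * (3/4 + x)) / (1/2 + 2*x)^2 + (1/2 - x) * (1/2 + x) / (2*x)^2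
      + 3*x*(1 - 3*x) / (1 - 6*x)^2) /
    (1 + 2*(1/4 - x)/(1/2 + 2*x) + (1/2 - x)/(2*x) + 3*x/(1 - 6*x))

/-! Both `fQ` and `gQ` have a simple pole at `0`. Multiplying the numerator of each by `δ²` and
the denominator by `δ` turns `δ · fQ δ` and `δ · gQ δ` into quotients of functions continuous at
`0`, with limits `(5/64)/(3/8) = 5/24` and `(1/16)/(1/4) = 1/4`; their difference is `1/24`. -/

open Filter Topology

lemma mul_fQ_eq {x : ℝ} (hx : x ≠ 0) :
    x * fQ x =
      ((1/2 - 2*x) * (1/2 + 2*x) / 16 + (1/2 - x) * (1/2 + x) / 4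
          + 3*x^3*(1 - 3*x) / (1 - 6*x)^2) /
        (x + (1/2 - 2*x)/4 + (1/2 - x)/2 + 3*x^2/(1 - 6*x)) := by
  rw [fQ, ← mul_div_mul_left _ _ hx, ← mul_div_assoc, ← mul_assoc, ← sq]
  congr 1
  · field_simp
    ring
  · field_simp

lemma mul_gQ_eq {x : ℝ} (hx : x ≠ 0) :
    x * gQ x =
      (2 * x^2 * ((1/4 - x) * (3/4 + x)) / (1/2 + 2*x)^2 + (1/2 - x) * (1/2 + x) / 4
          + 3*x^3*(1 - 3*x) / (1 - 6*x)^2) /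
        (x + 2*x*(1/4 - x)/(1/2 + 2*x) + (1/2 - x)/2 + 3*x^2/(1 - 6*x)) := by
  rw [gQ, ← mul_div_mul_left _ _ hx, ← mul_div_assoc, ← mul_assoc, ← sq]
  congr 1
  · field_simp
    ring
  · field_simp

lemma tendsto_nhdsNE_of_eq_continuousAt {X Y : Type*} [TopologicalSpace X] [TopologicalSpace Y]
    {f g : X → Y} {a : X} {b : Y} (hfg : ∀ x ≠ a, f x = g x) (hg : ContinuousAt g a)
    (hb : g a = b) : Tendsto f (𝓝[≠] a) (𝓝 b) :=
  hb ▸ (hg.tendsto.mono_left nhdsWithin_le_nhds).congr' <|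
    eventually_nhdsWithin_of_forall fun x hx => (hfg x hx).symm

lemma tendsto_mul_fQ : Tendsto (fun x => x * fQ x) (𝓝[≠] 0) (𝓝 (5/24)) :=
  tendsto_nhdsNE_of_eq_continuousAt (fun _ => mul_fQ_eq) (by fun_prop (disch := norm_num))
    (by norm_num)

lemma tendsto_mul_gQ : Tendsto (fun x => x * gQ x) (𝓝[≠] 0) (𝓝 (1/4)) :=
  tendsto_nhdsNE_of_eq_continuousAt (fun _ => mul_gQ_eq) (by fun_prop (disch := norm_num))
    (by norm_num)

theorem stmt5 :
    Filter.Tendsto (fun δ : ℝ => δ * (gQ δ - fQ δ))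
      (nhdsWithin 0 (Set.Ioi 0)) (nhds (1/24)) := by
  have h := (tendsto_mul_gQ.sub tendsto_mul_fQ).mono_left (nhdsGT_le_nhdsNE 0)
  convert h using 2
  · ring
  · norm_num
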